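/- arXiv:1003.1740 — 2 statements merged into one kernel-verified Lean document; each statement's English description precedes it below -/
import Mathlib

section
/- If L, Aφ, Aψ belong to the dual order V* of V, and u solves the bilateral obstacle problem, then Au ∈ V* and L ∧ Aφ ≤ Au ≤ L ∨ Aψ in V*. -/
/-!
Both bounds come from comparison with an auxiliary one-sided obstacle problem. For the upper
bound, let `z ≤ u` solve the variational inequality with data `M = L ∨ Aψ` on `{w ≤ u}`.
Testing it with `z + (ψ - z)⁺ = ψ ⊔ z` and using `Aψ ≤ M` gives `ψ ≤ z` by strict
T-monotonicity; then `z` is admissible for the bilateral problem, and testing both inequalities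
against each other with `L ≤ M` gives `z = u`. The inequality of the auxiliary problem at
`w = u - p` is then `Au ≤ M`. The lower bound is the same argument after `x ↦ -x`, and
`m ≤ Au` with `m ∈ V*` puts `Au` in `V*`.
-/

/-- Membership in the dual order `V* = P' - P'`: a functional belongs to `V*` iff it is a
difference of two functionals that are nonnegative on the positive cone of `V`. -/
def InDualOrder {V : Type*} [Lattice V] [AddCommGroup V] [Module ℝ V]
    (T : V →ₗ[ℝ] ℝ) : Prop :=
  ∃ P Q : V →ₗ[ℝ] ℝ, (∀ w : V, 0 ≤ w → 0 ≤ P w) ∧ (∀ w : V, 0 ≤ w → 0 ≤ Q w) ∧ T = P - Q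

section

variable {V : Type*} [Lattice V] [AddCommGroup V] [Module ℝ V]

theorem InDualOrder.of_le {m T : V →ₗ[ℝ] ℝ} (hm : InDualOrder m)
    (hle : ∀ w : V, 0 ≤ w → m w ≤ T w) : InDualOrder T := by
  obtain ⟨P, Q, hP, hQ, rfl⟩ := hm
  refine ⟨P + (T - (P - Q)), Q, fun w hw => ?_, hQ, by abel⟩
  have := hle w hw
  simp only [LinearMap.add_apply, LinearMap.sub_apply] at this ⊢
  linarith [hP w hw]

def StrictTMonotone (A : V → V →ₗ[ℝ] ℝ) : Prop :=
  ∀ u v : V, (u - v) ⊔ 0 ≠ 0 → 0 < A u ((u - v) ⊔ 0) - A v ((u - v) ⊔ 0)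

namespace StrictTMonotone

variable {A : V → V →ₗ[ℝ] ℝ}

theorem neg_comp (hA : StrictTMonotone A) : StrictTMonotone (fun x => -A (-x)) := by
  intro u v huv
  have := hA (-v) (-u) (by rwa [neg_sub_neg])
  rw [neg_sub_neg] at this
  simp only [LinearMap.neg_apply]
  linarith

variable [AddLeftMono V]

theorem le_of_apply_le (hA : StrictTMonotone A) {x y : V}
    (h : A x ((x - y) ⊔ 0) ≤ A y ((x - y) ⊔ 0)) : x ≤ y := by
  by_contra hxy
  have hne : (x - y) ⊔ 0 ≠ 0 := fun h0 => hxy (sub_nonpos.mp (sup_eq_right.mp h0))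
  linarith [hA x y hne]

end StrictTMonotone

variable [AddLeftMono V] {A : V → V →ₗ[ℝ] ℝ}

theorem apply_le_of_upper_aux_solution (hA : StrictTMonotone A) {ψ φ u z : V}
    {L M : V →ₗ[ℝ] ℝ} (hψu : ψ ≤ u) (huφ : u ≤ φ)
    (hVI : ∀ v : V, ψ ≤ v → v ≤ φ → 0 ≤ A u (v - u) - L (v - u))
    (hM_ge : ∀ w : V, 0 ≤ w → L w ≤ M w ∧ A ψ w ≤ M w)
    (hzu : z ≤ u) (hz : ∀ w : V, w ≤ u → 0 ≤ A z (w - z) - M (w - z)) :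
    ∀ p : V, 0 ≤ p → A u p ≤ M p := by
  have hψz : ψ ≤ z := by
    apply hA.le_of_apply_le
    have hw : z + (ψ - z) ⊔ 0 = ψ ⊔ z := by rw [add_sup, add_sub_cancel, add_zero]
    have := hz _ (hw ▸ sup_le hψu hzu)
    rw [add_sub_cancel_left] at this
    linarith [(hM_ge ((ψ - z) ⊔ 0) le_sup_right).2]
  have hz_eq : z = u := by
    refine le_antisymm hzu (hA.le_of_apply_le ?_)
    have hq : 0 ≤ u - z := sub_nonneg.mpr hzu
    rw [sup_eq_left.mpr hq]
    have h1 := hVI z hψz (hzu.trans huφ)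
    have h2 := hz u le_rfl
    rw [← neg_sub u z, map_neg, map_neg] at h1
    linarith [(hM_ge _ hq).1]
  intro p hp
  have := hz (u - p) (sub_le_self u hp)
  rw [hz_eq, sub_sub_cancel_left, map_neg, map_neg] at this
  linarith

theorem le_apply_of_lower_aux_solution (hA : StrictTMonotone A) {ψ φ u z : V}
    {L m : V →ₗ[ℝ] ℝ} (hψu : ψ ≤ u) (huφ : u ≤ φ)
    (hVI : ∀ v : V, ψ ≤ v → v ≤ φ → 0 ≤ A u (v - u) - L (v - u))
    (hm_le : ∀ w : V, 0 ≤ w → m w ≤ L w ∧ m w ≤ A φ w)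
    (huz : u ≤ z) (hz : ∀ w : V, u ≤ w → 0 ≤ A z (w - z) - m (w - z)) :
    ∀ p : V, 0 ≤ p → m p ≤ A u p := by
  have key := apply_le_of_upper_aux_solution hA.neg_comp (L := -L) (M := -m)
    (neg_le_neg_iff.mpr huφ) (neg_le_neg_iff.mpr hψu) ?_ ?_ (neg_le_neg_iff.mpr huz) ?_
  · intro p hp
    have := key p hp
    simp only [neg_neg, LinearMap.neg_apply] at this
    linarith
  · intro v hv₁ hv₂
    have := hVI (-v) (le_neg.mpr hv₂) (neg_le.mp hv₁)
    simp only [neg_neg, LinearMap.neg_apply, sub_neg_eq_add, ← neg_add', map_neg] at this ⊢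
    linarith
  · intro w hw
    simp only [neg_neg, LinearMap.neg_apply]
    exact ⟨neg_le_neg (hm_le w hw).1, neg_le_neg (hm_le w hw).2⟩
  · intro w hw
    have := hz (-w) (le_neg.mpr hw)
    simp only [neg_neg, LinearMap.neg_apply, sub_neg_eq_add, ← neg_add', map_neg] at this ⊢
    linarith

end

theorem lewy_stampacchia_dual_order_general {V : Type*} [Lattice V] [AddCommGroup V] [Module ℝ V]
    [CovariantClass V V (· + ·) (· ≤ ·)]
    (A : V → V →ₗ[ℝ] ℝ)
    (hT : ∀ u v : V, (u - v) ⊔ 0 ≠ 0 → 0 < A u ((u - v) ⊔ 0) - A v ((u - v) ⊔ 0))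
    (ψ φ u : V)
    (L m M : V →ₗ[ℝ] ℝ)
    -- `m = L ∧ Aφ` : greatest lower bound of `L` and `Aφ` in the dual order, in `V*`
    (hmVstar : InDualOrder m)
    (hm_le : ∀ w : V, 0 ≤ w → m w ≤ L w ∧ m w ≤ A φ w)
    -- `M = L ∨ Aψ` : least upper bound of `L` and `Aψ` in the dual order, in `V*`
    (hM_ge : ∀ w : V, 0 ≤ w → L w ≤ M w ∧ A ψ w ≤ M w)
    (hu : ψ ≤ u ∧ u ≤ φ)
    (hVI : ∀ v : V, ψ ≤ v → v ≤ φ → 0 ≤ A u (v - u) - L (v - u))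
    (haux₁ : ∃! z : V, z ≤ u ∧ ∀ w : V, w ≤ u → 0 ≤ A z (w - z) - M (w - z))
    (haux₂ : ∃! z : V, u ≤ z ∧ ∀ w : V, u ≤ w → 0 ≤ A z (w - z) - m (w - z)) :
    InDualOrder (A u) ∧ ∀ w : V, 0 ≤ w → m w ≤ A u w ∧ A u w ≤ M w := by
  obtain ⟨hψu, huφ⟩ := hu
  obtain ⟨z₁, ⟨hz₁u, hz₁⟩, -⟩ := haux₁
  obtain ⟨z₂, ⟨huz₂, hz₂⟩, -⟩ := haux₂
  have hupper := apply_le_of_upper_aux_solution hT hψu huφ hVI hM_ge hz₁u hz₁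
  have hlower := le_apply_of_lower_aux_solution hT hψu huφ hVI hm_le huz₂ hz₂
  exact ⟨hmVstar.of_le hlower, fun w hw => ⟨hlower w hw, hupper w hw⟩⟩

/-- Lewy–Stampacchia inequalities in the dual order: if `L`, `Aφ`, `Aψ ∈ V*` and `u` solves
the bilateral obstacle problem, then `Au ∈ V*` and `L ∧ Aφ ≤ Au ≤ L ∨ Aψ` in `V*`,
where `m = L ∧ Aφ` and `M = L ∨ Aψ` are the lattice operations in the dual order. -/
theorem lewy_stampacchia_dual_order {V : Type*} [Lattice V] [AddCommGroup V] [Module ℝ V]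
    [CovariantClass V V (· + ·) (· ≤ ·)]
    (A : V → V →ₗ[ℝ] ℝ)
    (hT : ∀ u v : V, (u - v) ⊔ 0 ≠ 0 → 0 < A u ((u - v) ⊔ 0) - A v ((u - v) ⊔ 0))
    (ψ φ u : V) (hψφ : ψ ≤ φ)
    (L m M : V →ₗ[ℝ] ℝ)
    (hL : InDualOrder L) (hAφ : InDualOrder (A φ)) (hAψ : InDualOrder (A ψ))
    -- `m = L ∧ Aφ` : greatest lower bound of `L` and `Aφ` in the dual order, in `V*`
    (hmVstar : InDualOrder m)
    (hm_le : ∀ w : V, 0 ≤ w → m w ≤ L w ∧ m w ≤ A φ w)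
    (hm_glb : ∀ m' : V →ₗ[ℝ] ℝ, (∀ w : V, 0 ≤ w → m' w ≤ L w ∧ m' w ≤ A φ w) →
      ∀ w : V, 0 ≤ w → m' w ≤ m w)
    -- `M = L ∨ Aψ` : least upper bound of `L` and `Aψ` in the dual order, in `V*`
    (hMVstar : InDualOrder M)
    (hM_ge : ∀ w : V, 0 ≤ w → L w ≤ M w ∧ A ψ w ≤ M w)
    (hM_lub : ∀ M' : V →ₗ[ℝ] ℝ, (∀ w : V, 0 ≤ w → L w ≤ M' w ∧ A ψ w ≤ M' w) →
      ∀ w : V, 0 ≤ w → M w ≤ M' w)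
    (hu : ψ ≤ u ∧ u ≤ φ)
    (hVI : ∀ v : V, ψ ≤ v → v ≤ φ → 0 ≤ A u (v - u) - L (v - u))
    (haux₁ : ∃! z : V, z ≤ u ∧ ∀ w : V, w ≤ u → 0 ≤ A z (w - z) - M (w - z))
    (haux₂ : ∃! z : V, u ≤ z ∧ ∀ w : V, u ≤ w → 0 ≤ A z (w - z) - m (w - z)) :
    InDualOrder (A u) ∧ ∀ w : V, 0 ≤ w → m w ≤ A u w ∧ A u w ≤ M w :=
  lewy_stampacchia_dual_order_general A hT ψ φ u L m M hmVstar hm_le hM_ge hu hVI haux₁ haux₂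
end

section
/- Let u be the unique solution of the two-obstacle problem on K_ψ^φ and ū the unique solution of the lower one-obstacle problem on K_ψ = {v ∈ V : v ≥ ψ}, both with the same forcing L and strictly T-monotone operator A. If Aφ ≥ L in V', then ū ≤ φ, hence ū = u. -/
/-!
Test the lower-obstacle inequality for `ū` with `v = ū ⊓ φ = ū - (ū - φ)⁺`, which is admissible
because `ψ ≤ φ`. It gives `⟨Aū, (ū - φ)⁺⟩ ≤ L (ū - φ)⁺ ≤ ⟨Aφ, (ū - φ)⁺⟩`, so strict T-monotonicity
forces `(ū - φ)⁺ = 0`. Then `ū` solves the two-obstacle problem, and uniqueness gives `ū = u`.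
-/

section

variable {V : Type*} [Lattice V] [AddCommGroup V] [Module ℝ V]

def IsStrictlyTMonotone (A : V → V →ₗ[ℝ] ℝ) : Prop :=
  ∀ u v : V, (u - v)⁺ ≠ 0 → 0 < A u (u - v)⁺ - A v (u - v)⁺

theorem IsStrictlyTMonotone.le_of_lowerObstacle_of_supersolution [AddLeftMono V]
    {A : V → V →ₗ[ℝ] ℝ} (hA : IsStrictlyTMonotone A) {L : V →ₗ[ℝ] ℝ} {ψ φ ub : V}
    (hψφ : ψ ≤ φ) (hub : ψ ≤ ub) (hVIub : ∀ v : V, ψ ≤ v → 0 ≤ A ub (v - ub) - L (v - ub))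
    (hφ : ∀ w : V, 0 ≤ w → L w ≤ A φ w) :
    ub ≤ φ := by
  by_contra hnle
  have hpos : (ub - φ)⁺ ≠ 0 := fun h => hnle (sub_nonpos.mp (posPart_eq_zero.mp h))
  have htest := hVIub (ub ⊓ φ) (le_inf hub hψφ)
  rw [inf_eq_sub_posPart_sub, sub_sub_cancel_left, map_neg, map_neg] at htest
  linarith [hφ _ (posPart_nonneg (ub - φ)), hA ub φ hpos]

end

/-- If `Aφ ≥ L` in `V'`, then the solution `ū` of the lower one-obstacle problem on
`K_ψ` satisfies `ū ≤ φ`, hence it coincides with the solution `u` of the two-obstacle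
problem on `K_ψ^φ`. -/
theorem lower_obstacle_eq_bilateral {V : Type*} [Lattice V] [AddCommGroup V] [Module ℝ V]
    [CovariantClass V V (· + ·) (· ≤ ·)]
    (A : V → V →ₗ[ℝ] ℝ)
    (hT : ∀ u v : V, (u - v) ⊔ 0 ≠ 0 → 0 < A u ((u - v) ⊔ 0) - A v ((u - v) ⊔ 0))
    (ψ φ : V) (hψφ : ψ ≤ φ)
    (L : V →ₗ[ℝ] ℝ)
    (u ub : V)
    (hu : ψ ≤ u ∧ u ≤ φ)
    (hVI : ∀ v : V, ψ ≤ v → v ≤ φ → 0 ≤ A u (v - u) - L (v - u))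
    (hub : ψ ≤ ub)
    (hVIub : ∀ v : V, ψ ≤ v → 0 ≤ A ub (v - ub) - L (v - ub))
    -- uniqueness of the solution of the two-obstacle problem
    (huniq : ∀ w₁ w₂ : V, (ψ ≤ w₁ ∧ w₁ ≤ φ ∧ ∀ v : V, ψ ≤ v → v ≤ φ → 0 ≤ A w₁ (v - w₁) - L (v - w₁)) →
      (ψ ≤ w₂ ∧ w₂ ≤ φ ∧ ∀ v : V, ψ ≤ v → v ≤ φ → 0 ≤ A w₂ (v - w₂) - L (v - w₂)) → w₁ = w₂)
    (hAφL : ∀ w : V, 0 ≤ w → L w ≤ A φ w) :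
    ub ≤ φ ∧ ub = u := by
  have hA : IsStrictlyTMonotone A := hT
  have hle : ub ≤ φ := hA.le_of_lowerObstacle_of_supersolution hψφ hub hVIub hAφL
  exact ⟨hle, huniq ub u ⟨hub, hle, fun v hv _ => hVIub v hv⟩ ⟨hu.1, hu.2, hVI⟩⟩
end
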